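/- Let G be a finite group, K a normal subgroup, H ≤ G with G = KH, and χ ∈ Irr(G) with K ≤ Ker χ. If τ ∈ Irr(G) satisfies K ≤ Ker τ and the restrictions τ_H and χ_H have a common irreducible constituent θ with χ_H = θ irreducible, then τ = χ. -/

import Mathlib

open Module

/-- An irreducible finite-dimensional complex representation of `G`,
    standing in for an irreducible character of `G`. -/
structure IrrRep (k : Type) [Field k] (G : Type*) [Group G] where
  V : Type
  [isAddCommGroup : AddCommGroup V]
  [isModule : Module k V]
  [isFinDim : FiniteDimensional k V]
  [isNontrivial : Nontrivial V]
  ρ : Representation k G V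
  irreducible : ∀ U : Submodule k V, (∀ g : G, ∀ x ∈ U, ρ g x ∈ U) → U = ⊥ ∨ U = ⊤

attribute [instance] IrrRep.isAddCommGroup IrrRep.isModule IrrRep.isFinDim IrrRep.isNontrivial

namespace IrrRep

variable {k : Type} [Field k] {G : Type*} [Group G]

/-- The degree `χ(1)` of the character. -/
noncomputable def degree (W : IrrRep k G) : ℕ := finrank k W.V

/-- The character `χ : G → k`. -/
noncomputable def char (W : IrrRep k G) : G → k := fun g => LinearMap.trace k W.V (W.ρ g)

/-- The kernel `Ker χ` of the character. -/
def ker (W : IrrRep k G) : Subgroup G := MonoidHom.ker W.ρ.asGroupHom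

/-- The codegree `cod χ = |G : Ker χ| / χ(1)`. -/
noncomputable def cod (W : IrrRep k G) : ℕ := W.ker.index / W.degree

end IrrRep

/-- `K` is `p`-nilpotent: it has a normal `p`-complement. -/
def IsPNilpotent (p : ℕ) (K : Type*) [Group K] : Prop :=
  ∃ H : Subgroup K, H.Normal ∧ Nat.Coprime (Nat.card H) p ∧ ∃ m : ℕ, H.index = p ^ m

/-- `K` is `p`-solvable: it has a subnormal series each of whose factors is a
`p`-group or a `p'`-group. -/
def IsPSolvable (p : ℕ) (K : Type*) [Group K] : Prop :=
  ∃ (n : ℕ) (s : Fin (n + 1) → Subgroup K), s 0 = ⊥ ∧ s (Fin.last n) = ⊤ ∧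
    ∀ i : Fin n, s i.castSucc ≤ s i.succ ∧ ((s i.castSucc).subgroupOf (s i.succ)).Normal ∧
      ((∃ m : ℕ, (s i.castSucc).relIndex (s i.succ) = p ^ m) ∨
        Nat.Coprime ((s i.castSucc).relIndex (s i.succ)) p)

/-- The solvable radical `Sol(G)`: the largest solvable normal subgroup. -/
def solvableRadical (G : Type*) [Group G] : Subgroup G :=
  ⨆ H ∈ {H : Subgroup G | H.Normal ∧ IsSolvable H}, H

/-- `O_{p',p}(Sol(G))`: the largest solvable `p`-nilpotent normal subgroup of `G`. -/
def OppSol (p : ℕ) (G : Type*) [Group G] : Subgroup G :=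
  ⨆ H ∈ {H : Subgroup G | H.Normal ∧ IsSolvable H ∧ IsPNilpotent p H}, H

/-- The usual inner product of class functions on a finite group. -/
noncomputable def innerChar (H : Type*) [Group H] [Finite H] (f g : H → ℂ) : ℂ :=
  (Nat.card H : ℂ)⁻¹ * ∑ᶠ h : H, f h * (starRingEnd ℂ) (g h)

/-! Since `K` lies in the kernels of `τ` and `χ`, the function `τ χ̄` is constant on the cosets
of `K`, and `G = KH` makes every coset meet `H`. Hence `∑_G τ χ̄` is the nonzero multiple
`|K| / |K ∩ H|` of `∑_H τ χ̄ = ∑_H τ θ̄ ≠ 0`, so `⟨τ, χ⟩_G ≠ 0` and orthogonality of irreducible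
characters forces `τ = χ`. -/

-- `P = ∑ (M h)ᴴ M h` is positive definite and invariant (Weyl's unitary trick), which makes
-- `M g⁻¹ = P⁻¹ (M g)ᴴ P`.
open Matrix ComplexOrder in
theorem Matrix.trace_map_inv {G m 𝕜 : Type*} [Group G] [Fintype G] [Fintype m] [DecidableEq m]
    [RCLike 𝕜] (M : G →* Matrix m m 𝕜) (g : G) : (M g⁻¹).trace = star (M g).trace := by
  set P : Matrix m m 𝕜 := ∑ h, (M h)ᴴ * M h with hP_def
  have hP : P.PosDef := by
    classical
    rw [hP_def, ← Finset.add_sum_erase _ _ (Finset.mem_univ 1), map_one, conjTranspose_one,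
      one_mul]
    exact PosDef.one.add_posSemidef <| Finset.sum_induction _ _ (fun _ _ => PosSemidef.add)
      PosSemidef.zero fun h _ => posSemidef_conjTranspose_mul_self (M h)
  have hP_inv : (M g)ᴴ * P * M g = P := by
    simp only [hP_def, Finset.mul_sum, Finset.sum_mul, mul_assoc]
    simp only [← mul_assoc (M g)ᴴ, ← conjTranspose_mul, ← map_mul]
    exact Fintype.sum_equiv (Equiv.mulRight g) _ _ fun h => rfl
  have hP_conj : P * M g⁻¹ = (M g)ᴴ * P := by
    calc P * M g⁻¹ = (M g)ᴴ * P * M g * M g⁻¹ := by rw [hP_inv]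
      _ = (M g)ᴴ * P := by rw [mul_assoc _ (M g), ← map_mul, mul_inv_cancel, map_one, mul_one]
  have := hP.isUnit.invertible
  rw [← invOf_mul_cancel_left P (M g⁻¹), hP_conj, trace_mul_comm, mul_assoc, mul_invOf_self,
    mul_one, trace_conjTranspose]

theorem Representation.character_inv {G 𝕜 V : Type*} [Group G] [Fintype G] [RCLike 𝕜]
    [AddCommGroup V] [Module 𝕜 V] [FiniteDimensional 𝕜 V] (ρ : Representation 𝕜 G V) (g : G) :
    ρ.character g⁻¹ = star (ρ.character g) := by
  let b := Module.finBasis 𝕜 V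
  let M : G →* Matrix _ _ 𝕜 := (LinearMap.toMatrixAlgEquiv b).toMonoidHom.comp ρ
  have hM (h : G) : ρ.character h = (M h).trace := LinearMap.trace_eq_matrix_trace 𝕜 b (ρ h)
  rw [hM, hM, Matrix.trace_map_inv]

open Finset in
theorem MonoidHom.sum_comp_of_surjective {A B M : Type*} [Group A] [Fintype A] [Group B]
    [Fintype B] [AddCommMonoid M] (φ : A →* B) (hφ : Function.Surjective φ) (f : B → M) :
    ∑ a, f (φ a) = Nat.card φ.ker • ∑ b, f b := by
  classical
  have hfiber (b : B) : #{a | φ a = b} = Nat.card φ.ker := by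
    rw [MonoidHom.card_fiber_eq_of_mem_range φ (hφ b) ⟨1, map_one φ⟩, Nat.card_eq_fintype_card,
      ← Fintype.card_subtype]
    exact Fintype.card_congr (Equiv.refl _)
  rw [← sum_fiberwise univ φ, smul_sum]
  refine sum_congr rfl fun b _ => ?_
  rw [sum_congr rfl fun a ha => congrArg f (mem_filter.mp ha).2, sum_const, hfiber]

theorem QuotientGroup.mk'_comp_subtype_surjective {G : Type*} [Group G] {K H : Subgroup G}
    [K.Normal] (hKH : K ⊔ H = ⊤) : Function.Surjective ((QuotientGroup.mk' K).comp H.subtype) := by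
  intro q
  induction q using QuotientGroup.induction_on with | H g => ?_
  have hg : g ∈ ((H ⊔ K : Subgroup G) : Set G) := by rw [sup_comm, hKH]; trivial
  obtain ⟨h, hh, k, hk, rfl⟩ := Subgroup.mul_normal H K ▸ hg
  exact ⟨⟨h, hh⟩, (QuotientGroup.mk_mul_of_mem h hk).symm⟩

theorem QuotientGroup.card_ker_mk'_comp_subtype {G : Type*} [Group G] (K H : Subgroup G)
    [K.Normal] : Nat.card ((QuotientGroup.mk' K).comp H.subtype).ker = Nat.card ↥(K ⊓ H) := by
  rw [← MonoidHom.comap_ker, QuotientGroup.ker_mk', ← Subgroup.subgroupOf,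
    ← Subgroup.inf_subgroupOf_right]
  exact Nat.card_congr (Subgroup.subgroupOfEquivOfLe inf_le_right).toEquiv

theorem Subgroup.card_inf_smul_sum_eq {G M : Type*} [Group G] [Fintype G] [AddCommMonoid M]
    {K H : Subgroup G} [K.Normal] [Fintype H] (hKH : K ⊔ H = ⊤) {f : G → M}
    (hf : ∀ g, ∀ k ∈ K, f (g * k) = f g) :
    Nat.card ↥(K ⊓ H) • ∑ g, f g = Nat.card K • ∑ h : H, f h := by
  classical
  let f' : G ⧸ K → M := fun q => f q.out
  have hf' (g : G) : f g = f' g := by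
    obtain ⟨k, hk⟩ := QuotientGroup.mk_out_eq_mul K g
    simp only [f', hk, hf g k k.2]
  have hG := (QuotientGroup.mk' K).sum_comp_of_surjective (QuotientGroup.mk'_surjective K) f'
  have hH := ((QuotientGroup.mk' K).comp H.subtype).sum_comp_of_surjective
    (QuotientGroup.mk'_comp_subtype_surjective hKH) f'
  rw [QuotientGroup.ker_mk'] at hG
  rw [QuotientGroup.card_ker_mk'_comp_subtype] at hH
  simp only [MonoidHom.comp_apply, QuotientGroup.mk'_apply, Subgroup.coe_subtype, ← hf'] at hG hH
  rw [hG, hH, smul_comm]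

namespace IrrRep

variable {k : Type} [Field k] {G : Type*} [Group G]

theorem isIrreducible (W : IrrRep k G) : W.ρ.IsIrreducible where
  exists_pair_ne := ⟨⊥, ⊤, fun h => bot_ne_top (congrArg Subrepresentation.toSubmodule h)⟩
  eq_bot_or_eq_top U := by
    refine (W.irreducible U.toSubmodule fun g _ hx => U.apply_mem_toSubmodule g hx).imp
      (fun h => ?_) (fun h => ?_) <;> exact Subrepresentation.toSubmodule_injective h

theorem char_mul_of_mem {W : IrrRep k G} {K : Subgroup G} (hK : K ≤ W.ker) (g : G) {x : G}
    (hx : x ∈ K) : W.char (g * x) = W.char g := by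
  have hρ : W.ρ x = 1 := congrArg Units.val (MonoidHom.mem_ker.mp (hK hx))
  simp only [char, map_mul, hρ, mul_one]

end IrrRep

theorem Representation.character_eq_of_sum_ne_zero {G k V W : Type*} [Group G] [Fintype G]
    [Field k] [IsAlgClosed k] [Invertible (Nat.card G : k)] [AddCommGroup V] [Module k V]
    [FiniteDimensional k V] [AddCommGroup W] [Module k W] [FiniteDimensional k W]
    {ρ : Representation k G V} {σ : Representation k G W} [ρ.IsIrreducible] [σ.IsIrreducible]
    (h : ∑ g, ρ.character g * σ.character g⁻¹ ≠ 0) : ρ.character = σ.character := by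
  have horth := ρ.char_orthonormal σ
  split_ifs at horth with hequiv
  · exact (char_iso hequiv.some).symm
  · exact absurd ((mul_eq_zero.mp horth).resolve_left (inv_ne_zero (Invertible.ne_zero _))) h

/-- Uniqueness (Lemma 6.8 of Navarro's book): if G = KH with K ⊴ G, χ, τ ∈ Irr(G)
contain K in their kernels, χ_H = θ is irreducible, and θ is a constituent of τ_H,
then τ = χ. -/
theorem eq_of_res_constituent
    (G : Type) [Group G] [Fintype G]
    (K : Subgroup G) (hKn : K.Normal) (H : Subgroup G) (hKH : K ⊔ H = ⊤)
    (χ τ : IrrRep ℂ G) (hKχ : K ≤ χ.ker) (hKτ : K ≤ τ.ker)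
    (θ : IrrRep ℂ H)
    (hres : ∀ h : H, χ.char (h : G) = θ.char h)
    (hconst : innerChar H (fun h : H => τ.char (h : G)) θ.char ≠ 0) :
    τ.char = χ.char := by
  classical
  have := hKn
  have hsum_H : ∑ h : H, τ.char h * star (χ.char h) ≠ 0 := by
    rw [innerChar, finsum_eq_sum_of_fintype] at hconst
    simpa [hres] using right_ne_zero_of_mul hconst
  have hsum_G : ∑ g, τ.char g * star (χ.char g) ≠ 0 := by
    have hcount := Subgroup.card_inf_smul_sum_eq (K := K) hKH
      (f := fun g => τ.char g * star (χ.char g)) fun g k hk => by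
        simp only [IrrRep.char_mul_of_mem hKτ g hk, IrrRep.char_mul_of_mem hKχ g hk]
    intro h0
    rw [h0, smul_zero, eq_comm, smul_eq_zero] at hcount
    exact hcount.elim Nat.card_pos.ne' hsum_H
  have := τ.isIrreducible
  have := χ.isIrreducible
  have : Invertible (Nat.card G : ℂ) := invertibleOfNonzero (Nat.cast_ne_zero.mpr Nat.card_pos.ne')
  refine Representation.character_eq_of_sum_ne_zero (ρ := τ.ρ) (σ := χ.ρ) ?_
  simp only [Representation.character_inv]
  exact hsum_G
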